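/- arXiv:1905.08251 — 4 statements merged into one kernel-verified Lean document; each statement's English description precedes it below -/
import Mathlib

section
/- Let X be a Banach space, let 1 ≤ p < ∞, and let (A_m)_{m∈ℤ} be a sequence of bounded linear operators on X admitting an exponential trichotomy with constants C, λ > 0. Then there exists a bounded linear operator G on the Banach space ℓ^p(ℤ,X) such that ‖G‖ ≤ 2C(1+e^{−λ})/(1−e^{−λ}) and, for every y = (y_n)_{n∈ℤ} ∈ ℓ^p(ℤ,X), the sequence x = Gy satisfies x_{n+1} − A_n x_n = y_{n+1} for all n ∈ ℤ. -/
open scoped ENNReal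

/-- The forward products `𝒜(m,n) = A_{m-1} ⋯ A_n` (equal to the identity when `m ≤ n`). -/
noncomputable def calA {X : Type*} [NormedAddCommGroup X] [NormedSpace ℝ X]
    (A : ℤ → X →L[ℝ] X) (m n : ℤ) : X →L[ℝ] X :=
  (List.range (m - n).toNat).foldl (fun B k => (A (n + (k : ℤ))).comp B)
    (ContinuousLinearMap.id ℝ X)

/-- The sequence `(A_m)_{m ∈ ℤ}` admits an exponential trichotomy with constants `C, lam > 0`.
The projections are `P 0 = P¹` (stable), `P 1 = P²` (unstable) and `P 2 = P³` (central).
For `m ≤ n`, the operator `𝒜(m,n)` (the inverse of `𝒜(n,m)` restricted to `Ker P¹_m`)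
is described implicitly: `w = 𝒜(m,n) P^i_n x` iff `w ∈ Ker P¹_m` and `𝒜(n,m) w = P^i_n x`. -/
def ExpTrichotomy {X : Type*} [NormedAddCommGroup X] [NormedSpace ℝ X]
    (A : ℤ → X →L[ℝ] X) (C lam : ℝ) : Prop :=
  ∃ P : Fin 3 → ℤ → X →L[ℝ] X,
    (∀ m, P 0 m + P 1 m + P 2 m = ContinuousLinearMap.id ℝ X) ∧
    (∀ i m, (P i m).comp (P i m) = P i m) ∧
    (∀ i j m, i ≠ j → (P i m).comp (P j m) = 0) ∧
    (∀ i m, (P i (m + 1)).comp (A m) = (A m).comp (P i m)) ∧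
    (∀ m, Set.BijOn (A m) (LinearMap.ker (P 0 m : X →ₗ[ℝ] X) : Set X)
      (LinearMap.ker (P 0 (m + 1) : X →ₗ[ℝ] X) : Set X)) ∧
    (∀ m n : ℤ, n ≤ m → ‖(calA A m n).comp (P 0 n)‖ ≤ C * Real.exp (-lam * (m - n))) ∧
    (∀ m n : ℤ, m ≤ n → ∀ x w : X, w ∈ LinearMap.ker (P 0 m : X →ₗ[ℝ] X) →
      calA A n m w = P 1 n x → ‖w‖ ≤ C * Real.exp (-lam * (n - m)) * ‖x‖) ∧
    (∀ m n : ℤ, n ≤ m → ‖(calA A m n).comp (P 2 n)‖ ≤ C * Real.exp (-lam * (m - n))) ∧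
    (∀ m n : ℤ, m ≤ n → ∀ x w : X, w ∈ LinearMap.ker (P 0 m : X →ₗ[ℝ] X) →
      calA A n m w = P 2 n x → ‖w‖ ≤ C * Real.exp (-lam * (n - m)) * ‖x‖)

/-! The solution operator is the discrete Green operator `(G y)_n = ∑_k Γ(n,k) y_k` with
`Γ(n,k) = 𝒜(n,k)(P¹_k + P³_k)` for `k ≤ n` and `Γ(n,k) = -𝒜(n,k)P²_k` for `k > n`, the latter
being the inverse of `𝒜(k,n)` on `Ker P¹_n` applied to `P²_k`. The trichotomy estimates give
`‖Γ(n,k)‖ ≤ 2C e^{-λ|n-k|}`, so `G` is the operator-norm sum over `j` of the weighted shifts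
`y ↦ (Γ(n,n-j) y_{n-j})_n`, each of norm at most `2C e^{-λ|j|}` on every `ℓ^p`; summing the
geometric series gives the bound. Since the three projections add up to the identity,
`Γ(n+1,k) - A_n Γ(n,k)` is `Id` for `k = n+1` and `0` otherwise, which is the difference equation
for `x = G y`. -/

namespace lp

variable {ι ι' E : Type*} [NormedAddCommGroup E] {p : ℝ≥0∞}

theorem _root_.Memℓp.comp_equiv {f : ι → E} (hf : Memℓp f p) (e : ι' ≃ ι) :
    Memℓp (f ∘ e) p := by
  obtain rfl | rfl | hp := p.trichotomy
  · rw [memℓp_zero_iff] at hf ⊢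
    exact hf.preimage e.injective.injOn
  · rw [memℓp_infty_iff] at hf ⊢
    convert hf using 1
    exact e.surjective.range_comp fun i => ‖f i‖
  · rw [memℓp_gen_iff hp] at hf ⊢
    exact e.summable_iff.mpr hf

def compEquiv (e : ι' ≃ ι) (f : lp (fun _ : ι => E) p) : lp (fun _ : ι' => E) p :=
  ⟨f ∘ e, (lp.memℓp f).comp_equiv e⟩

@[simp]
theorem compEquiv_apply (e : ι' ≃ ι) (f : lp (fun _ : ι => E) p) (i : ι') :
    compEquiv e f i = f (e i) := rfl

theorem norm_compEquiv [Fact (1 ≤ p)] (e : ι' ≃ ι) (f : lp (fun _ : ι => E) p) :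
    ‖compEquiv e f‖ = ‖f‖ := by
  obtain rfl | rfl | hp := p.trichotomy
  · exact absurd (Fact.out : (1 : ℝ≥0∞) ≤ 0) (by simp)
  · simp only [norm_eq_ciSup, compEquiv_apply]
    exact e.iSup_comp (g := fun i => ‖f i‖)
  · simp only [norm_eq_tsum_rpow hp, compEquiv_apply]
    rw [e.tsum_eq (fun i => ‖f i‖ ^ p.toReal)]

variable {𝕜 F : Type*} [NontriviallyNormedField 𝕜] [NormedSpace 𝕜 E] [NormedAddCommGroup F]
  [NormedSpace 𝕜 F]

theorem exists_weightedComp (p : ℝ≥0∞) [Fact (1 ≤ p)] {K : ι' → E →L[𝕜] F} {c : ℝ}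
    (hc : 0 ≤ c) (hK : ∀ i, ‖K i‖ ≤ c) (e : ι' ≃ ι) :
    ∃ T : lp (fun _ : ι => E) p →L[𝕜] lp (fun _ : ι' => F) p,
      ‖T‖ ≤ c ∧ ∀ y i, T y i = K i (y (e i)) := by
  have hle (y : lp (fun _ : ι => E) p) (i : ι') :
      ‖K i (y (e i))‖ ≤ ‖(c • toNorm (compEquiv e y)) i‖ := by
    rw [coeFn_smul, Pi.smul_apply, toNorm_coe, compEquiv_apply, smul_eq_mul, norm_mul,
      norm_norm, Real.norm_of_nonneg hc]
    exact (K i).le_of_opNorm_le (hK i) _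
  let T : lp (fun _ : ι => E) p →ₗ[𝕜] lp (fun _ : ι' => F) p :=
    { toFun y := ⟨fun i => K i (y (e i)), (lp.memℓp _).mono' (hle y)⟩
      map_add' y z := by ext i; exact map_add (K i) _ _
      map_smul' a y := by ext i; exact map_smul (K i) _ _ }
  refine ⟨T.mkContinuous c fun y => ?_, T.mkContinuous_norm_le hc _, fun y i => rfl⟩
  have hp : p ≠ 0 := (zero_lt_one.trans_le Fact.out).ne'
  calc ‖T y‖ ≤ ‖c • toNorm (compEquiv e y)‖ := norm_mono hp (hle y)
    _ ≤ ‖c‖ * ‖toNorm (compEquiv e y)‖ := norm_const_smul_le hp _ _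
    _ = c * ‖y‖ := by rw [norm_toNorm, norm_compEquiv, Real.norm_of_nonneg hc]

theorem exists_kernelOperator [AddCommGroup ι] (p : ℝ≥0∞) [Fact (1 ≤ p)] [CompleteSpace F]
    (K : ι → ι → E →L[𝕜] F) {κ : ι → ℝ} {s : ℝ} (hκ : HasSum κ s)
    (hK : ∀ n k, ‖K n k‖ ≤ κ (n - k)) :
    ∃ T : lp (fun _ : ι => E) p →L[𝕜] lp (fun _ : ι => F) p,
      ‖T‖ ≤ s ∧ ∀ y n, HasSum (fun k => K n k (y k)) (T y n) := by
  have hκ_nonneg (j : ι) : 0 ≤ κ j := by simpa using (norm_nonneg _).trans (hK j 0)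
  choose S hS_norm hS using fun j => exists_weightedComp p (K := fun n => K n (n - j))
    (hκ_nonneg j) (fun n => by simpa using hK n (n - j)) (Equiv.subRight j)
  refine ⟨∑' j, S j, tsum_of_norm_bounded hκ hS_norm, fun y n => ?_⟩
  have hsum : HasSum (fun j => S j y n) ((∑' j, S j) y n) :=
    ((evalCLM 𝕜 (fun _ : ι => F) p n).comp (ContinuousLinearMap.apply 𝕜 _ y)).hasSum
      (Summable.of_norm_bounded hκ.summable hS_norm).hasSum
  simp only [hS] at hsum
  exact (Equiv.subLeft n).hasSum_iff.mp hsum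

end lp

theorem hasSum_pow_natAbs {r : ℝ} (h0 : 0 ≤ r) (h1 : r < 1) :
    HasSum (fun j : ℤ => r ^ j.natAbs) ((1 + r) / (1 - r)) := by
  have hpos : HasSum (fun n : ℕ => r ^ (n + 1)) (r / (1 - r)) := by
    simpa [pow_succ', div_eq_mul_inv] using (hasSum_geometric_of_lt_one h0 h1).mul_left r
  have hneg : HasSum (fun n : ℕ => r ^ (-((n : ℤ) + 1)).natAbs) (r / (1 - r)) := by
    convert hpos using 3 with n
    omega
  convert HasSum.of_add_one_of_neg_add_one (f := fun j : ℤ => r ^ j.natAbs) hpos hneg using 1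
  field_simp [(sub_pos.2 h1).ne']
  ring

theorem Real.exp_neg_mul_intCast_sub_eq_pow {lam : ℝ} {m n : ℤ} (h : n ≤ m) :
    Real.exp (-lam * (m - n)) = Real.exp (-lam) ^ (m - n).natAbs := by
  rw [← Real.exp_nat_mul, Nat.cast_natAbs, Int.cast_abs, abs_of_nonneg (by simpa using h)]
  push_cast
  ring_nf

section Propagator

variable {X : Type*} [NormedAddCommGroup X] [NormedSpace ℝ X] (A : ℤ → X →L[ℝ] X)

theorem calA_self (n : ℤ) : calA A n n = ContinuousLinearMap.id ℝ X := by
  simp [calA]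

theorem calA_succ {m n : ℤ} (h : n ≤ m) : calA A (m + 1) n = (A m).comp (calA A m n) := by
  have h1 : (m + 1 - n).toNat = (m - n).toNat + 1 := by omega
  have h3 : n + ((m - n) ⊔ 0) = m := by omega
  rw [calA, calA, h1, List.range_succ]
  simp [List.foldl_append, h3]

theorem calA_succ_self (n : ℤ) : calA A (n + 1) n = A n := by
  rw [calA_succ A le_rfl, calA_self, ContinuousLinearMap.comp_id]

theorem calA_trans {n k m : ℤ} (hnk : n ≤ k) (hkm : k ≤ m) :
    calA A m n = (calA A m k).comp (calA A k n) := by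
  induction m, hkm using Int.leInduction with
  | base => rw [calA_self, ContinuousLinearMap.id_comp]
  | succ m hkm ih =>
    rw [calA_succ A (hnk.trans hkm), calA_succ A hkm, ih, ContinuousLinearMap.comp_assoc]

theorem calA_bijOn {S : ℤ → Set X} (hbij : ∀ m, Set.BijOn (A m) (S m) (S (m + 1))) {n m : ℤ}
    (hnm : n ≤ m) : Set.BijOn (calA A m n) (S n) (S m) := by
  induction m, hnm using Int.leInduction with
  | base => simpa [calA_self] using Set.bijOn_id (S n)
  | succ m hnm ih =>
    rw [calA_succ A hnm, ContinuousLinearMap.coe_comp]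
    exact (hbij m).comp ih

theorem exists_clm_calA_apply_eq {S : ℤ → Submodule ℝ X}
    (hbij : ∀ m, Set.BijOn (A m) (S m) (S (m + 1))) {n k : ℤ} (hnk : n ≤ k) {Q : X →L[ℝ] X}
    (hQ : ∀ x, Q x ∈ S k) {c : ℝ} (hc : ∀ x, ∀ w ∈ S n, calA A k n w = Q x → ‖w‖ ≤ c * ‖x‖) :
    ∃ W : X →L[ℝ] X, ∀ x, W x ∈ S n ∧ calA A k n (W x) = Q x := by
  have hB := calA_bijOn A (S := fun m => S m) hbij hnk
  let L : S n ≃ₗ[ℝ] S k := LinearEquiv.ofBijective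
    ((calA A k n : X →ₗ[ℝ] X).restrict fun _ hx => hB.mapsTo hx) hB.bijective
  let W : X →ₗ[ℝ] X :=
    (S n).subtype ∘ₗ L.symm.toLinearMap ∘ₗ (Q : X →ₗ[ℝ] X).codRestrict (S k) hQ
  have hW (x : X) : W x ∈ S n ∧ calA A k n (W x) = Q x :=
    ⟨(L.symm _).2, congrArg Subtype.val (L.apply_symm_apply _)⟩
  exact ⟨W.mkContinuous c fun x => hc x _ (hW x).1 (hW x).2, hW⟩

end Propagator

section GreenKernel

variable {X : Type*} [NormedAddCommGroup X] [NormedSpace ℝ X] (A : ℤ → X →L[ℝ] X)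
  (P : Fin 3 → ℤ → X →L[ℝ] X)

/-- `W n k` plays the role of `𝒜(n,k) P²_k` for `n ≤ k`; its values for `n > k` are never used. -/
noncomputable def greenKernel (W : ℤ → ℤ → X →L[ℝ] X) (n k : ℤ) : X →L[ℝ] X :=
  if k ≤ n then (calA A n k).comp (P 0 k + P 2 k) else -W n k

theorem greenKernel_succ_sub {W : ℤ → ℤ → X →L[ℝ] X}
    (hP : ∀ m, P 0 m + P 1 m + P 2 m = ContinuousLinearMap.id ℝ X)
    (hbij : ∀ m, Set.BijOn (A m) (LinearMap.ker (P 0 m : X →ₗ[ℝ] X) : Set X)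
      (LinearMap.ker (P 0 (m + 1) : X →ₗ[ℝ] X) : Set X))
    (hW : ∀ n k, n ≤ k → ∀ x, W n k x ∈ LinearMap.ker (P 0 n : X →ₗ[ℝ] X) ∧
      calA A k n (W n k x) = P 1 k x)
    (n k : ℤ) (x : X) :
    greenKernel A P W (n + 1) k x - A n (greenKernel A P W n k x) =
      if k = n + 1 then x else 0 := by
  rcases lt_trichotomy k (n + 1) with hk | rfl | hk
  · simp [greenKernel, show k ≤ n by omega, show k ≤ n + 1 by omega, hk.ne, calA_succ A]
  · have hA : A n (W n (n + 1) x) = P 1 (n + 1) x := by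
      simpa [calA_succ_self] using (hW n (n + 1) (by omega) x).2
    have hx := congrArg (· x) (hP (n + 1))
    simp only [greenKernel, le_refl, if_true, calA_self, show ¬ n + 1 ≤ n by omega, if_false]
    simp only [add_apply, ContinuousLinearMap.id_apply] at hx
    rw [ContinuousLinearMap.id_comp, neg_apply, map_neg, hA, sub_neg_eq_add, add_apply,
      add_right_comm, hx]
  · have hstep : A n (W n k x) = W (n + 1) k x := by
      have hw := hW n k (by omega) x
      have hw' := hW (n + 1) k (by omega) x
      refine (calA_bijOn A hbij (by omega : n + 1 ≤ k)).injOn ((hbij n).mapsTo hw.1) hw'.1 ?_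
      rw [hw'.2, ← hw.2, calA_trans A (by omega : n ≤ n + 1) (by omega : n + 1 ≤ k),
        calA_succ_self, ContinuousLinearMap.comp_apply]
    simp [greenKernel, show ¬ k ≤ n by omega, show ¬ k ≤ n + 1 by omega, hk.ne', hstep]

end GreenKernel

theorem ExpTrichotomy.exists_greenKernel {X : Type*} [NormedAddCommGroup X] [NormedSpace ℝ X]
    {A : ℤ → X →L[ℝ] X} {C lam : ℝ} (h : ExpTrichotomy A C lam) :
    ∃ G : ℤ → ℤ → X →L[ℝ] X,
      (∀ n k, ‖G n k‖ ≤ 2 * C * Real.exp (-lam) ^ (n - k).natAbs) ∧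
      ∀ n k x, G (n + 1) k x - A n (G n k x) = if k = n + 1 then x else 0 := by
  obtain ⟨P, hP, -, horth, -, hbij, hstable, hunstable, hcentral, -⟩ := h
  have hC : 0 ≤ C := by simpa using (norm_nonneg _).trans (hstable 0 0 le_rfl)
  have hP1 (k : ℤ) (x : X) : P 1 k x ∈ LinearMap.ker (P 0 k : X →ₗ[ℝ] X) := by
    simpa using congrArg (· x) (horth 0 1 k (by decide))
  choose! W hW using fun n k (hnk : n ≤ k) =>
    exists_clm_calA_apply_eq A hbij hnk (hP1 k) (hunstable n k hnk)
  refine ⟨greenKernel A P W, fun n k => ?_, greenKernel_succ_sub A P hP hbij hW⟩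
  by_cases hkn : k ≤ n
  · rw [greenKernel, if_pos hkn, ContinuousLinearMap.comp_add, two_mul, add_mul,
      ← Real.exp_neg_mul_intCast_sub_eq_pow hkn]
    exact norm_add_le_of_le (hstable n k hkn) (hcentral n k hkn)
  · have hnk : n ≤ k := by omega
    rw [greenKernel, if_neg hkn, norm_neg]
    refine ContinuousLinearMap.opNorm_le_bound _ (by positivity) fun x => ?_
    calc ‖W n k x‖ ≤ C * Real.exp (-lam) ^ (n - k).natAbs * ‖x‖ := by
          rw [show (n - k).natAbs = (k - n).natAbs by omega,
            ← Real.exp_neg_mul_intCast_sub_eq_pow hnk]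
          exact hunstable n k hnk x _ (hW n k hnk x).1 (hW n k hnk x).2
      _ ≤ 2 * C * Real.exp (-lam) ^ (n - k).natAbs * ‖x‖ := by gcongr; linarith

theorem trichotomy_admissibility_lp_general
    {X : Type*} [NormedAddCommGroup X] [NormedSpace ℝ X] [CompleteSpace X]
    (p : ℝ≥0∞) [Fact (1 ≤ p)]
    (A : ℤ → X →L[ℝ] X) (C lam : ℝ) (hlam : 0 < lam)
    (h : ExpTrichotomy A C lam) :
    ∃ G : lp (fun _ : ℤ => X) p →L[ℝ] lp (fun _ : ℤ => X) p,
      ‖G‖ ≤ 2 * C * (1 + Real.exp (-lam)) / (1 - Real.exp (-lam)) ∧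
      ∀ y : lp (fun _ : ℤ => X) p, ∀ n : ℤ,
        (G y : ∀ _ : ℤ, X) (n + 1) - A n ((G y : ∀ _ : ℤ, X) n)
          = (y : ∀ _ : ℤ, X) (n + 1) := by
  obtain ⟨K, hK_norm, hK_rec⟩ := h.exists_greenKernel
  have hκ := (hasSum_pow_natAbs (Real.exp_pos (-lam)).le
    (Real.exp_lt_one_iff.2 (neg_lt_zero.2 hlam))).mul_left (2 * C)
  obtain ⟨G, hG_norm, hG⟩ := lp.exists_kernelOperator p K hκ hK_norm
  refine ⟨G, by rwa [mul_div_assoc], fun y n => ?_⟩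
  have hsum := (hG y (n + 1)).sub ((A n).hasSum (hG y n))
  simp only [hK_rec] at hsum
  simpa using hsum.unique (hasSum_single (n + 1) fun k hk => if_neg hk)

/-- If `(A_m)_{m∈ℤ}` admits an exponential trichotomy with constants `C, lam > 0` and
`1 ≤ p < ∞`, then there is a bounded linear operator `G` on `ℓ^p(ℤ, X)` with
`‖G‖ ≤ 2C(1+e^{-lam})/(1-e^{-lam})` such that for every `y ∈ ℓ^p(ℤ,X)` the sequence
`x = G y` satisfies `x_{n+1} - A_n x_n = y_{n+1}` for all `n ∈ ℤ`. -/
theorem trichotomy_admissibility_lp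
    {X : Type*} [NormedAddCommGroup X] [NormedSpace ℝ X] [CompleteSpace X]
    (p : ℝ≥0∞) [Fact (1 ≤ p)] (hp : p ≠ ∞)
    (A : ℤ → X →L[ℝ] X) (C lam : ℝ) (hC : 0 < C) (hlam : 0 < lam)
    (h : ExpTrichotomy A C lam) :
    ∃ G : lp (fun _ : ℤ => X) p →L[ℝ] lp (fun _ : ℤ => X) p,
      ‖G‖ ≤ 2 * C * (1 + Real.exp (-lam)) / (1 - Real.exp (-lam)) ∧
      ∀ y : lp (fun _ : ℤ => X) p, ∀ n : ℤ,
        (G y : ∀ _ : ℤ, X) (n + 1) - A n ((G y : ∀ _ : ℤ, X) n)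
          = (y : ∀ _ : ℤ, X) (n + 1) :=
  trichotomy_admissibility_lp_general p A C lam hlam h
end

section
/- Let X be a Banach space, (A_m)_{m∈ℤ} a sequence of bounded linear operators on X, and f_n : X → X (n ∈ ℤ) maps satisfying ‖f_n(x) − f_n(y)‖ ≤ c‖x − y‖ for all n ∈ ℤ and x, y ∈ X, with some c > 0; set F_n = A_n + f_n. Suppose there is a bounded linear operator G on ℓ^∞(ℤ,X) such that for every y ∈ ℓ^∞(ℤ,X) the sequence x = Gy satisfies x_{n+1} − A_n x_n = y_{n+1} for all n ∈ ℤ, and suppose c‖G‖ < 1. Set K = ‖G‖/(1 − c‖G‖). Then for every ε > 0 and every sequence (y_n)_{n∈ℤ} ⊂ X with sup_{n∈ℤ} ‖y_{n+1} − F_n(y_n)‖ ≤ ε/K, there exists a sequence (x_n)_{n∈ℤ} ⊂ X with x_{n+1} = F_n(x_n) for all n ∈ ℤ and sup_{n∈ℤ} ‖x_n − y_n‖ ≤ ε. -/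
/-!
Write the sought trajectory as `x = y + u`. It is a trajectory iff
`u (n+1) - A n (u n) = f n (y n + u n) - f n (y n) - d n`, where `d n` is the defect of `y`.
The right-hand side is a `c`-Lipschitz (Nemytskii) operator `W` on `ℓ^∞(ℤ,X)` with
`‖W 0‖ ≤ ε / K`, so `G ∘ W` is a `c‖G‖`-contraction whose fixed point `u` solves the equation,
and the a priori estimate of the contraction principle gives
`‖u‖ ≤ ‖G‖ ‖W 0‖ / (1 - c‖G‖) ≤ K (ε / K) ≤ ε`.
-/

open scoped ENNReal NNReal

namespace lp

variable {ι κ E F : Type*} [NormedAddCommGroup E] [NormedAddCommGroup F]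

theorem memℓp_infty_comp_of_lipschitzWith {g : ι → E → F} {c : ℝ≥0}
    (hg : ∀ i, LipschitzWith c (g i)) (hg₀ : Memℓp (fun i => g i 0) ∞) (σ : ι → κ)
    (u : lp (fun _ : κ => E) ∞) : Memℓp (fun i => g i (u (σ i))) ∞ := by
  have hdiff : Memℓp (fun i => g i (u (σ i)) - g i 0) ∞ := by
    refine memℓp_infty ⟨c * ‖u‖, ?_⟩
    rintro _ ⟨i, rfl⟩
    calc ‖g i (u (σ i)) - g i 0‖ ≤ c * ‖u (σ i) - 0‖ := (hg i).norm_sub_le _ _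
      _ ≤ c * ‖u‖ := by
        rw [sub_zero]; gcongr; exact norm_apply_le_norm ENNReal.top_ne_zero u (σ i)
  convert hdiff.add hg₀ using 1
  exact funext fun i => (sub_add_cancel _ _).symm

/-- The Nemytskii (superposition) operator `u ↦ (g i (u (σ i)))ᵢ` on bounded sequences. -/
def nemytskii (g : ι → E → F) {c : ℝ≥0} (hg : ∀ i, LipschitzWith c (g i))
    (hg₀ : Memℓp (fun i => g i 0) ∞) (σ : ι → κ) :
    lp (fun _ : κ => E) ∞ → lp (fun _ : ι => F) ∞ :=
  fun u => ⟨_, memℓp_infty_comp_of_lipschitzWith hg hg₀ σ u⟩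

variable {g : ι → E → F} {c : ℝ≥0} (hg : ∀ i, LipschitzWith c (g i))
  (hg₀ : Memℓp (fun i => g i 0) ∞) (σ : ι → κ)

@[simp]
theorem nemytskii_apply (u : lp (fun _ : κ => E) ∞) (i : ι) :
    nemytskii g hg hg₀ σ u i = g i (u (σ i)) :=
  rfl

theorem lipschitzWith_nemytskii : LipschitzWith c (nemytskii g hg hg₀ σ) := by
  refine lipschitzWith_iff_norm_sub_le.2 fun u v => norm_le_of_forall_le (by positivity) fun i => ?_
  calc ‖(nemytskii g hg hg₀ σ u - nemytskii g hg hg₀ σ v) i‖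
        = ‖g i (u (σ i)) - g i (v (σ i))‖ := rfl
    _ ≤ c * ‖u (σ i) - v (σ i)‖ := (hg i).norm_sub_le _ _
    _ ≤ c * ‖u - v‖ := by
      gcongr; exact norm_apply_le_norm ENNReal.top_ne_zero (u - v) (σ i)

end lp

theorem ContinuousLinearMap.exists_apply_comp_eq_self_norm_le {𝕜 E F : Type*}
    [NontriviallyNormedField 𝕜] [NormedAddCommGroup E] [NormedSpace 𝕜 E] [CompleteSpace E]
    [NormedAddCommGroup F] [NormedSpace 𝕜 F] (G : F →L[𝕜] E) {W : E → F} {c : ℝ≥0}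
    (hW : LipschitzWith c W) (hcG : c * ‖G‖ < 1) :
    ∃ u, G (W u) = u ∧ ‖u‖ ≤ ‖G‖ * ‖W 0‖ / (1 - c * ‖G‖) := by
  have hΦ : ContractingWith (‖G‖₊ * c) (G ∘ W) :=
    ⟨by rw [mul_comm]; exact_mod_cast hcG, G.lipschitz.comp hW⟩
  refine ⟨ContractingWith.fixedPoint _ hΦ, hΦ.fixedPoint_isFixedPt, ?_⟩
  calc ‖ContractingWith.fixedPoint _ hΦ‖ ≤ ‖G (W 0)‖ / (1 - ‖G‖₊ * c) := by
        simpa [dist_eq_norm] using hΦ.dist_fixedPoint_le 0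
    _ ≤ ‖G‖ * ‖W 0‖ / (1 - c * ‖G‖) := by
        push_cast; rw [mul_comm (c : ℝ)]
        gcongr
        · linarith
        · exact G.le_opNorm _

section Shadowing

variable {X : Type*} [NormedAddCommGroup X] [NormedSpace ℝ X]
  (A : ℤ → X →L[ℝ] X) (f : ℤ → X → X) (y : ℤ → X)

/-- `y + u` is a trajectory iff `u (n + 1) - A n (u n) = shadowingRhs A f y (n + 1) (u n)`;
the index is shifted so that the equation has the shape solved by `G`. -/
def shadowingRhs (m : ℤ) (z : X) : X :=
  f (m - 1) (y (m - 1) + z) - (y m - A (m - 1) (y (m - 1)))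

theorem lipschitzWith_shadowingRhs {c : ℝ≥0} (hf : ∀ n x x', ‖f n x - f n x'‖ ≤ c * ‖x - x'‖)
    (m : ℤ) : LipschitzWith c (shadowingRhs A f y m) :=
  lipschitzWith_iff_norm_sub_le.2 fun z w => by
    simpa [shadowingRhs] using hf (m - 1) (y (m - 1) + z) (y (m - 1) + w)

theorem norm_shadowingRhs_zero_le {δ : ℝ} (hy : ∀ n, ‖y (n + 1) - (A n (y n) + f n (y n))‖ ≤ δ)
    (m : ℤ) : ‖shadowingRhs A f y m 0‖ ≤ δ := by
  have h := hy (m - 1)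
  rw [sub_add_cancel, ← norm_neg, neg_sub] at h
  refine le_of_eq_of_le ?_ h
  simp only [shadowingRhs, add_zero]
  congr 1
  abel

theorem add_succ_eq_of_sub_eq_shadowingRhs {u : ℤ → X} {n : ℤ}
    (hu : u (n + 1) - A n (u n) = shadowingRhs A f y (n + 1) (u n)) :
    y (n + 1) + u (n + 1) = A n (y n + u n) + f n (y n + u n) := by
  simp only [shadowingRhs, add_sub_cancel_right, sub_eq_iff_eq_add] at hu
  rw [hu, map_add]
  abel

end Shadowing

/-- Abstract shadowing theorem: if `G` is a bounded operator on `ℓ^∞(ℤ,X)` solving the linear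
difference equation `x_{n+1} - A_n x_n = y_{n+1}`, the maps `f_n` are `c`-Lipschitz and
`c‖G‖ < 1`, then with `K = ‖G‖/(1 - c‖G‖)`, every `(ε/K, ℓ^∞)`-pseudotrajectory of
`x_{n+1} = F_n(x_n)` (where `F_n = A_n + f_n`) is `ε`-shadowed by a true trajectory. -/
theorem abstract_shadowing
    {X : Type*} [NormedAddCommGroup X] [NormedSpace ℝ X] [CompleteSpace X]
    (A : ℤ → X →L[ℝ] X) (f : ℤ → X → X) (c : ℝ) (hc : 0 < c)
    (hf : ∀ n : ℤ, ∀ x y : X, ‖f n x - f n y‖ ≤ c * ‖x - y‖)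
    (G : lp (fun _ : ℤ => X) ∞ →L[ℝ] lp (fun _ : ℤ => X) ∞)
    (hG : ∀ y : lp (fun _ : ℤ => X) ∞, ∀ n : ℤ,
      (G y : ∀ _ : ℤ, X) (n + 1) - A n ((G y : ∀ _ : ℤ, X) n) = (y : ∀ _ : ℤ, X) (n + 1))
    (hcG : c * ‖G‖ < 1) (K : ℝ) (hK : K = ‖G‖ / (1 - c * ‖G‖)) :
    ∀ ε : ℝ, 0 < ε → ∀ y : ℤ → X,
      (∀ n : ℤ, ‖y (n + 1) - (A n (y n) + f n (y n))‖ ≤ ε / K) →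
      ∃ x : ℤ → X, (∀ n : ℤ, x (n + 1) = A n (x n) + f n (x n)) ∧
        ∀ n : ℤ, ‖x n - y n‖ ≤ ε := by
  intro ε hε y hy
  lift c to ℝ≥0 using hc.le
  have hK₀ : 0 ≤ K := hK ▸ div_nonneg (norm_nonneg G) (by linarith)
  have hg₀ := norm_shadowingRhs_zero_le A f y hy
  set W := lp.nemytskii (shadowingRhs A f y) (lipschitzWith_shadowingRhs A f y hf)
    (memℓp_infty ⟨ε / K, by rintro _ ⟨m, rfl⟩; exact hg₀ m⟩) (· - 1)
  obtain ⟨u, hu, hu_norm⟩ :=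
    G.exists_apply_comp_eq_self_norm_le (lp.lipschitzWith_nemytskii _ _ _) hcG
  have hW₀ : ‖W 0‖ ≤ ε / K :=
    lp.norm_le_of_forall_le (by positivity) fun m => by simpa [W] using hg₀ m
  have hu_le : ‖u‖ ≤ ε := calc
    ‖u‖ ≤ ‖G‖ * (ε / K) / (1 - c * ‖G‖) := hu_norm.trans (by gcongr)
    _ = K * (ε / K) := by rw [hK]; ring
    _ ≤ ε := by
      rcases hK₀.eq_or_lt with h | h
      · simp [← h, hε.le]
      · rw [mul_div_cancel₀ _ h.ne']
  refine ⟨fun n => y n + u n, fun n => add_succ_eq_of_sub_eq_shadowingRhs A f y ?_, fun n => ?_⟩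
  · simpa [W, hu] using hG (W u) n
  · simpa using (lp.norm_apply_le_norm ENNReal.top_ne_zero u n).trans hu_le
end

section
/- Let X be a Banach space and let (A_m)_{m∈ℤ} be a sequence of invertible bounded linear operators on X (so each inverse is also bounded). Suppose the linear system x_{n+1} = A_n x_n has the ℓ^∞-shadowing property: for every ε > 0 there exists δ > 0 such that every sequence (y_n)_{n∈ℤ} ⊂ X with sup_{n∈ℤ} ‖y_{n+1} − A_n y_n‖ ≤ δ admits a sequence (x_n)_{n∈ℤ} with x_{n+1} = A_n x_n for all n and sup_{n∈ℤ} ‖x_n − y_n‖ ≤ ε. Then for every bounded sequence (z_n)_{n∈ℤ} ⊂ X there exists a bounded sequence (w_n)_{n∈ℤ} ⊂ X such that w_{n+1} − A_n w_n = z_{n+1} for all n ∈ ℤ. -/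
noncomputable def fwdAux {X : Type*} [NormedAddCommGroup X] [NormedSpace ℝ X]
    (A : ℤ → X ≃L[ℝ] X) (v : ℤ → X) : ℕ → X
  | 0 => 0
  | k+1 => A k (fwdAux A v k) + v (k+1)

noncomputable def bwdAux {X : Type*} [NormedAddCommGroup X] [NormedSpace ℝ X]
    (A : ℤ → X ≃L[ℝ] X) (v : ℤ → X) : ℕ → X
  | 0 => 0
  | k+1 => (A (-(k+1))).symm (bwdAux A v k - v (-k))

noncomputable def glueAux {X : Type*} [NormedAddCommGroup X] [NormedSpace ℝ X]
    (A : ℤ → X ≃L[ℝ] X) (v : ℤ → X) (n : ℤ) : X :=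
  if 0 ≤ n then fwdAux A v n.toNat else bwdAux A v (-n).toNat

lemma glueAux_rec {X : Type*} [NormedAddCommGroup X] [NormedSpace ℝ X]
    (A : ℤ → X ≃L[ℝ] X) (v : ℤ → X) (n : ℤ) :
    glueAux A v (n + 1) = A n (glueAux A v n) + v (n + 1) := by
  rcases le_or_gt 0 n with h | h
  · have h1 : (0:ℤ) ≤ n + 1 := by omega
    have h2 : (n+1).toNat = n.toNat + 1 := by omega
    have hn : (n.toNat : ℤ) = n := by omega
    simp only [glueAux, if_pos h, if_pos h1, h2, fwdAux]

    rw [hn]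
  · rcases eq_or_lt_of_le (by omega : n ≤ -1) with h1 | h1
    · subst h1
      have e0 : (-1:ℤ) + 1 = 0 := by norm_num
      simp only [glueAux, e0]
      norm_num
      simp only [fwdAux, bwdAux]
      push_cast
      rw [ContinuousLinearEquiv.apply_symm_apply]
      abel
    · have h2 : ¬ (0:ℤ) ≤ n + 1 := by omega
      have h3 : ¬ (0:ℤ) ≤ n := by omega
      simp only [glueAux, if_neg h2, if_neg h3]
      set k : ℕ := (-(n+1)).toNat with hk
      have hk1 : (-n).toNat = k + 1 := by omega
      have hk2 : -((k:ℤ)+1) = n := by omega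
      have hk3 : -(k:ℤ) = n + 1 := by omega
      rw [hk1]
      simp only [bwdAux]

      rw [hk2, hk3, ContinuousLinearEquiv.apply_symm_apply]
      abel

/-- If the linear system `x_{n+1} = A_n x_n` given by invertible bounded operators on a Banach
space has the `ℓ^∞`-shadowing property, then for every bounded sequence `(z_n)` there is a
bounded sequence `(w_n)` with `w_{n+1} - A_n w_n = z_{n+1}` for all `n ∈ ℤ`. -/
theorem shadowing_implies_admissibility
    {X : Type*} [NormedAddCommGroup X] [NormedSpace ℝ X] [CompleteSpace X]
    (A : ℤ → X ≃L[ℝ] X)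
    (hshad : ∀ ε : ℝ, 0 < ε → ∃ δ : ℝ, 0 < δ ∧ ∀ y : ℤ → X,
      (∀ n : ℤ, ‖y (n + 1) - A n (y n)‖ ≤ δ) →
      ∃ x : ℤ → X, (∀ n : ℤ, x (n + 1) = A n (x n)) ∧ ∀ n : ℤ, ‖x n - y n‖ ≤ ε) :
    ∀ z : ℤ → X, BddAbove (Set.range fun n => ‖z n‖) →
      ∃ w : ℤ → X, BddAbove (Set.range fun n => ‖w n‖) ∧
        ∀ n : ℤ, w (n + 1) - A n (w n) = z (n + 1) := by
  intro z hz
  obtain ⟨δ, hδ, hmain⟩ := hshad 1 one_pos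
  obtain ⟨C, hC⟩ := hz
  have hC' : ∀ n, ‖z n‖ ≤ C := fun n => hC (Set.mem_range_self n)
  have hC0 : 0 ≤ C := le_trans (norm_nonneg _) (hC' 0)
  set c : ℝ := δ / (C + 1) with hc
  have hcpos : 0 < c := div_pos hδ (by linarith)
  set v : ℤ → X := fun n => c • z n with hv
  set y : ℤ → X := glueAux A v with hy
  have hyrec : ∀ n : ℤ, y (n + 1) - A n (y n) = v (n + 1) := by
    intro n
    rw [hy, glueAux_rec A v n]
    abel
  have hpseudo : ∀ n : ℤ, ‖y (n + 1) - A n (y n)‖ ≤ δ := by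
    intro n
    rw [hyrec n]
    have : ‖v (n+1)‖ = c * ‖z (n+1)‖ := by
      rw [hv]; simp [norm_smul, abs_of_pos hcpos]
    rw [this]
    calc c * ‖z (n+1)‖ ≤ c * C := by
          exact mul_le_mul_of_nonneg_left (hC' _) hcpos.le
      _ ≤ c * (C + 1) := by nlinarith
      _ = δ := by rw [hc]; field_simp
  obtain ⟨x, hxrec, hxclose⟩ := hmain y hpseudo
  refine ⟨fun n => c⁻¹ • (y n - x n), ?_, ?_⟩
  · refine ⟨c⁻¹, ?_⟩
    rintro r ⟨n, rfl⟩
    simp only [norm_smul]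
    calc ‖c⁻¹‖ * ‖y n - x n‖ ≤ ‖c⁻¹‖ * 1 := by
          refine mul_le_mul_of_nonneg_left ?_ (norm_nonneg _)
          rw [← norm_neg]; simpa using hxclose n
      _ = c⁻¹ := by rw [mul_one, Real.norm_eq_abs, abs_of_pos (by positivity)]
  · intro n
    have h1 : x (n+1) = A n (x n) := hxrec n
    have : c⁻¹ • (y (n+1) - x (n+1)) - A n (c⁻¹ • (y n - x n))
        = c⁻¹ • (v (n+1)) := by
      rw [map_smul, map_sub, ← smul_sub, h1]
      congr 1
      rw [← hyrec n]; abel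
    rw [this, hv]
    simp only [smul_smul]
    rw [inv_mul_cancel₀ (ne_of_gt hcpos), one_smul]
end

section
/- Let X be a Banach space and let (A_m)_{m≥0} be a sequence of bounded linear operators on X. Suppose the linear system x_{n+1} = A_n x_n, n ≥ 0, has the ℓ^∞-shadowing property: for every ε > 0 there exists δ > 0 such that every sequence (y_n)_{n≥0} ⊂ X with sup_{n≥0} ‖y_{n+1} − A_n y_n‖ ≤ δ admits a sequence (x_n)_{n≥0} with x_{n+1} = A_n x_n for all n ≥ 0 and sup_{n≥0} ‖x_n − y_n‖ ≤ ε. Then for every bounded sequence (z_n)_{n≥0} ⊂ X with z_0 = 0 there exists a bounded sequence (w_n)_{n≥0} ⊂ X such that w_{n+1} − A_n w_n = z_{n+1} for all n ≥ 0. -/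
/-!
Linearity of the system lets the shadowing property be rescaled: a pseudo-orbit whose defects are
bounded by `K` is shadowed by a true orbit within `K ε / δ`. Apply this to the solution `u` of
`u₀ = 0`, `u_{n+1} = A_n u_n + z_{n+1}`, whose defects are exactly the `z_{n+1}`; subtracting the
shadowing orbit from `u` leaves a bounded solution of the inhomogeneous equation.
-/

section

variable {X : Type*} [NormedAddCommGroup X] [NormedSpace ℝ X]

def inhomogeneousSolution (A : ℕ → X →L[ℝ] X) (z : ℕ → X) : ℕ → X
  | 0 => 0
  | n + 1 => A n (inhomogeneousSolution A z n) + z (n + 1)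

theorem inhomogeneousSolution_succ_sub (A : ℕ → X →L[ℝ] X) (z : ℕ → X) (n : ℕ) :
    inhomogeneousSolution A z (n + 1) - A n (inhomogeneousSolution A z n) = z (n + 1) :=
  add_sub_cancel_left _ _

theorem exists_orbit_near_of_shadowing (A : ℕ → X →L[ℝ] X) {ε δ K : ℝ} (hδ : 0 < δ) (hK : 0 < K)
    (hshad : ∀ y : ℕ → X, (∀ n, ‖y (n + 1) - A n (y n)‖ ≤ δ) →
      ∃ x : ℕ → X, (∀ n, x (n + 1) = A n (x n)) ∧ ∀ n, ‖x n - y n‖ ≤ ε)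
    {y : ℕ → X} (hy : ∀ n, ‖y (n + 1) - A n (y n)‖ ≤ K) :
    ∃ x : ℕ → X, (∀ n, x (n + 1) = A n (x n)) ∧ ∀ n, ‖x n - y n‖ ≤ K / δ * ε := by
  have hc : 0 < δ / K := div_pos hδ hK
  have hy' : ∀ n, ‖(δ / K) • y (n + 1) - A n ((δ / K) • y n)‖ ≤ δ := fun n => by
    rw [map_smul, ← smul_sub, norm_smul, Real.norm_of_nonneg hc.le]
    calc δ / K * ‖y (n + 1) - A n (y n)‖ ≤ δ / K * K := by gcongr; exact hy n
      _ = δ := div_mul_cancel₀ δ hK.ne'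
  obtain ⟨x, hx, hxy⟩ := hshad (fun n => (δ / K) • y n) hy'
  refine ⟨fun n => (K / δ) • x n, fun n => by simp only [hx n, map_smul], fun n => ?_⟩
  have hinv : (K / δ) • (δ / K) • y n = y n := by
    rw [smul_smul, div_mul_div_cancel₀ hδ.ne', div_self hK.ne', one_smul]
  calc ‖(K / δ) • x n - y n‖ = K / δ * ‖x n - (δ / K) • y n‖ := by
        rw [← hinv, ← smul_sub, norm_smul, Real.norm_of_nonneg (div_pos hK hδ).le, hinv]
    _ ≤ K / δ * ε := by gcongr; exact hxy n

end

theorem one_sided_shadowing_implies_admissibility_general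
    {X : Type*} [NormedAddCommGroup X] [NormedSpace ℝ X]
    (A : ℕ → X →L[ℝ] X)
    (hshad : ∀ ε : ℝ, 0 < ε → ∃ δ : ℝ, 0 < δ ∧ ∀ y : ℕ → X,
      (∀ n : ℕ, ‖y (n + 1) - A n (y n)‖ ≤ δ) →
      ∃ x : ℕ → X, (∀ n : ℕ, x (n + 1) = A n (x n)) ∧ ∀ n : ℕ, ‖x n - y n‖ ≤ ε) :
    ∀ z : ℕ → X, BddAbove (Set.range fun n => ‖z n‖) → z 0 = 0 →
      ∃ w : ℕ → X, BddAbove (Set.range fun n => ‖w n‖) ∧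
        ∀ n : ℕ, w (n + 1) - A n (w n) = z (n + 1) := by
  intro z hz _
  obtain ⟨δ, hδ, hshad₁⟩ := hshad 1 one_pos
  obtain ⟨M, hM⟩ := hz
  set u := inhomogeneousSolution A z
  have hu : ∀ n, ‖u (n + 1) - A n (u n)‖ ≤ max M 1 := fun n => by
    rw [inhomogeneousSolution_succ_sub]
    exact (hM ⟨n + 1, rfl⟩).trans (le_max_left M 1)
  obtain ⟨x, hx, hxu⟩ := exists_orbit_near_of_shadowing A hδ (by positivity) hshad₁ hu
  refine ⟨u - x, ⟨max M 1 / δ * 1, ?_⟩, fun n => ?_⟩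
  · rintro _ ⟨n, rfl⟩
    simpa only [Pi.sub_apply, norm_sub_rev] using hxu n
  · rw [Pi.sub_apply, Pi.sub_apply, map_sub, hx n, sub_sub_sub_cancel_right,
      inhomogeneousSolution_succ_sub]

/-- If the linear system `x_{n+1} = A_n x_n`, `n ≥ 0`, has the `ℓ^∞`-shadowing property, then
for every bounded sequence `(z_n)_{n≥0}` with `z_0 = 0` there is a bounded sequence
`(w_n)_{n≥0}` with `w_{n+1} - A_n w_n = z_{n+1}` for all `n ≥ 0`. -/
theorem one_sided_shadowing_implies_admissibility
    {X : Type*} [NormedAddCommGroup X] [NormedSpace ℝ X] [CompleteSpace X]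
    (A : ℕ → X →L[ℝ] X)
    (hshad : ∀ ε : ℝ, 0 < ε → ∃ δ : ℝ, 0 < δ ∧ ∀ y : ℕ → X,
      (∀ n : ℕ, ‖y (n + 1) - A n (y n)‖ ≤ δ) →
      ∃ x : ℕ → X, (∀ n : ℕ, x (n + 1) = A n (x n)) ∧ ∀ n : ℕ, ‖x n - y n‖ ≤ ε) :
    ∀ z : ℕ → X, BddAbove (Set.range fun n => ‖z n‖) → z 0 = 0 →
      ∃ w : ℕ → X, BddAbove (Set.range fun n => ‖w n‖) ∧
        ∀ n : ℕ, w (n + 1) - A n (w n) = z (n + 1) :=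
  one_sided_shadowing_implies_admissibility_general A hshad
end
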